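/- arXiv:0707.2972 — 2 statements merged into one kernel-verified Lean document; each statement's English description precedes it below -/
import Mathlib

section
/- There is an isomorphism of commutative rings ℤ[x₁, x₂, v, w, u]/(2x₁ − 3x₂, 4x₁x₂, v² − 2x₁u, w³ − 2x₂u, v·w, 2x₂·v, 2x₁·w, u² − 1) ≅ ℤ[t, v, w, u]/(24t², v² − 6tu, w³ − 4tu, v·w, 4t·v, 6t·w, u² − 1), induced by x₁ ↦ 3t, x₂ ↦ 2t, v ↦ v, w ↦ w, u ↦ u. -/
open MvPolynomial

noncomputable section OrbifoldAux

def srcIdeal : Ideal (MvPolynomial (Fin 5) ℤ) :=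
  Ideal.span {2 * X 0 - 3 * X 1, 4 * (X 0 * X 1),
    X 2 ^ 2 - 2 * X 0 * X 4, X 3 ^ 3 - 2 * X 1 * X 4,
    X 2 * X 3, 2 * X 1 * X 2, 2 * X 0 * X 3, X 4 ^ 2 - 1}

def tgtIdeal : Ideal (MvPolynomial (Fin 4) ℤ) :=
  Ideal.span {24 * X 0 ^ 2, X 1 ^ 2 - 6 * X 0 * X 3,
    X 2 ^ 3 - 4 * X 0 * X 3, X 1 * X 2,
    4 * X 0 * X 1, 6 * X 0 * X 2, X 3 ^ 2 - 1}

def fwdVars : Fin 5 → MvPolynomial (Fin 4) ℤ :=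
  ![3 * X 0, 2 * X 0, X 1, X 2, X 3]

def bwdVars : Fin 4 → MvPolynomial (Fin 5) ℤ :=
  ![X 0 - X 1, X 2, X 3, X 4]

def fwdPre : MvPolynomial (Fin 5) ℤ →+* MvPolynomial (Fin 4) ℤ ⧸ tgtIdeal :=
  (Ideal.Quotient.mk tgtIdeal).comp (eval₂Hom C fwdVars)

def bwdPre : MvPolynomial (Fin 4) ℤ →+* MvPolynomial (Fin 5) ℤ ⧸ srcIdeal :=
  (Ideal.Quotient.mk srcIdeal).comp (eval₂Hom C bwdVars)

lemma tgt_mem (p : MvPolynomial (Fin 4) ℤ)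
    (h : p ∈ ({24 * X 0 ^ 2, X 1 ^ 2 - 6 * X 0 * X 3,
      X 2 ^ 3 - 4 * X 0 * X 3, X 1 * X 2,
      4 * X 0 * X 1, 6 * X 0 * X 2, X 3 ^ 2 - 1} : Set (MvPolynomial (Fin 4) ℤ))) :
    p ∈ tgtIdeal := Ideal.subset_span h

lemma src_mem (p : MvPolynomial (Fin 5) ℤ)
    (h : p ∈ ({2 * X 0 - 3 * X 1, 4 * (X 0 * X 1),
      X 2 ^ 2 - 2 * X 0 * X 4, X 3 ^ 3 - 2 * X 1 * X 4,
      X 2 * X 3, 2 * X 1 * X 2, 2 * X 0 * X 3, X 4 ^ 2 - 1} : Set (MvPolynomial (Fin 5) ℤ))) :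
    p ∈ srcIdeal := Ideal.subset_span h

lemma fwd_vanish : ∀ a ∈ srcIdeal, fwdPre a = 0 := by
  have hle : srcIdeal ≤ RingHom.ker fwdPre := Ideal.span_le.mpr ?_
  · intro a ha; exact hle ha
  intro x hx
  rw [SetLike.mem_coe, RingHom.mem_ker]
  have key : ∀ q : MvPolynomial (Fin 4) ℤ, eval₂Hom C fwdVars x = q → q ∈ tgtIdeal →
      fwdPre x = 0 := by
    intro q hq hmem
    simp only [fwdPre, RingHom.comp_apply, hq]
    exact (Ideal.Quotient.eq_zero_iff_mem).mpr hmem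
  simp only [Set.mem_insert_iff, Set.mem_singleton_iff] at hx
  rcases hx with h|h|h|h|h|h|h|h <;> subst h
  · refine key 0 ?_ tgtIdeal.zero_mem
    simp [fwdVars, map_ofNat]; ring
  · refine key (24 * X 0 ^ 2) ?_ (tgt_mem _ (by simp))
    simp [fwdVars, map_ofNat]; ring
  · refine key (X 1 ^ 2 - 6 * X 0 * X 3) ?_ (tgt_mem _ (by simp))
    simp [fwdVars, map_ofNat]; ring
  · refine key (X 2 ^ 3 - 4 * X 0 * X 3) ?_ (tgt_mem _ (by simp))
    simp [fwdVars, map_ofNat]; ring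
  · refine key (X 1 * X 2) ?_ (tgt_mem _ (by simp))
    simp [fwdVars, map_ofNat]
  · refine key (4 * X 0 * X 1) ?_ (tgt_mem _ (by simp))
    simp [fwdVars, map_ofNat]; ring
  · refine key (6 * X 0 * X 2) ?_ (tgt_mem _ (by simp))
    simp [fwdVars, map_ofNat]; ring
  · refine key (X 3 ^ 2 - 1) ?_ (tgt_mem _ (by simp))
    simp [fwdVars, map_ofNat]

lemma bwd_vanish : ∀ a ∈ tgtIdeal, bwdPre a = 0 := by
  have hle : tgtIdeal ≤ RingHom.ker bwdPre := Ideal.span_le.mpr ?_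
  · intro a ha; exact hle ha
  intro x hx
  rw [SetLike.mem_coe, RingHom.mem_ker]
  have key : ∀ q : MvPolynomial (Fin 5) ℤ, eval₂Hom C bwdVars x = q → q ∈ srcIdeal →
      bwdPre x = 0 := by
    intro q hq hmem
    simp only [bwdPre, RingHom.comp_apply, hq]
    exact (Ideal.Quotient.eq_zero_iff_mem).mpr hmem
  simp only [Set.mem_insert_iff, Set.mem_singleton_iff] at hx
  rcases hx with h|h|h|h|h|h|h <;> subst h
  -- 24 t² ↦ 24 (x0-x1)² = 4 x0 x1 + combination of generators
  · refine key ((4*(X 0*X 1)) + (4*(3*X 0 - 2*X 1))*(2*X 0 - 3*X 1)) ?_ ?_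
    · simp [bwdVars, map_ofNat]; ring
    · exact Ideal.add_mem _ (src_mem _ (by simp))
        (Ideal.mul_mem_left _ _ (src_mem _ (by simp)))
  · refine key ((X 2 ^ 2 - 2 * X 0 * X 4) + (-(2:MvPolynomial (Fin 5) ℤ)*X 4)*(2*X 0 - 3*X 1)) ?_ ?_
    · simp [bwdVars, map_ofNat]; ring
    · exact Ideal.add_mem _ (src_mem _ (by simp))
        (Ideal.mul_mem_left _ _ (src_mem _ (by simp)))
  · refine key ((X 3 ^ 3 - 2 * X 1 * X 4) + (-(2:MvPolynomial (Fin 5) ℤ)*X 4)*(2*X 0 - 3*X 1)) ?_ ?_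
    · simp [bwdVars, map_ofNat]; ring
    · exact Ideal.add_mem _ (src_mem _ (by simp))
        (Ideal.mul_mem_left _ _ (src_mem _ (by simp)))
  · refine key (X 2 * X 3) ?_ (src_mem _ (by simp))
    simp [bwdVars, map_ofNat]
  · refine key ((2 * X 1 * X 2) + (2*X 2)*(2*X 0 - 3*X 1)) ?_ ?_
    · simp [bwdVars, map_ofNat]; ring
    · exact Ideal.add_mem _ (src_mem _ (by simp))
        (Ideal.mul_mem_left _ _ (src_mem _ (by simp)))
  · refine key ((2 * X 0 * X 3) + (2*X 3)*(2*X 0 - 3*X 1)) ?_ ?_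
    · simp [bwdVars, map_ofNat]; ring
    · exact Ideal.add_mem _ (src_mem _ (by simp))
        (Ideal.mul_mem_left _ _ (src_mem _ (by simp)))
  · refine key (X 4 ^ 2 - 1) ?_ (src_mem _ (by simp))
    simp [bwdVars, map_ofNat]

def fwd : MvPolynomial (Fin 5) ℤ ⧸ srcIdeal →+* MvPolynomial (Fin 4) ℤ ⧸ tgtIdeal :=
  Ideal.Quotient.lift srcIdeal fwdPre fwd_vanish

def bwd : MvPolynomial (Fin 4) ℤ ⧸ tgtIdeal →+* MvPolynomial (Fin 5) ℤ ⧸ srcIdeal :=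
  Ideal.Quotient.lift tgtIdeal bwdPre bwd_vanish

lemma quot_eq_of_sub_mem {R : Type*} [CommRing R] {I : Ideal R} {a b : R}
    (h : a - b ∈ I) : Ideal.Quotient.mk I a = Ideal.Quotient.mk I b :=
  Ideal.Quotient.eq.mpr h

lemma fwd_mk (p : MvPolynomial (Fin 5) ℤ) :
    fwd (Ideal.Quotient.mk srcIdeal p) = Ideal.Quotient.mk tgtIdeal (eval₂Hom C fwdVars p) :=
  rfl

lemma bwd_mk (p : MvPolynomial (Fin 4) ℤ) :
    bwd (Ideal.Quotient.mk tgtIdeal p) = Ideal.Quotient.mk srcIdeal (eval₂Hom C bwdVars p) :=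
  rfl

set_option synthInstance.maxHeartbeats 1000000 in
set_option maxHeartbeats 1000000 in
lemma fwd_bwd : fwd.comp bwd = RingHom.id _ := by
  apply Ideal.Quotient.ringHom_ext
  apply MvPolynomial.ringHom_ext
  · intro n
    simp only [RingHom.comp_apply, RingHom.id_apply, eval₂Hom_C, bwd_mk, fwd_mk]
  · intro i
    fin_cases i <;>
      simp only [RingHom.comp_apply, RingHom.id_apply, bwd_mk, fwd_mk, eval₂Hom_X',
        map_sub, map_mul, map_ofNat, bwdVars, fwdVars, Fin.zero_eta, Fin.mk_one,
        Fin.reduceFinMk, Matrix.cons_val_zero, Matrix.cons_val_one,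
        Matrix.head_cons, Matrix.cons_val_two, Matrix.tail_cons, Matrix.cons_val_three,
        Matrix.cons_val_four, Fin.isValue]
    all_goals exact congrArg (Ideal.Quotient.mk tgtIdeal) (by ring)

set_option synthInstance.maxHeartbeats 1000000 in
set_option maxHeartbeats 1000000 in
lemma bwd_fwd : bwd.comp fwd = RingHom.id _ := by
  apply Ideal.Quotient.ringHom_ext
  apply MvPolynomial.ringHom_ext
  · intro n
    simp only [RingHom.comp_apply, RingHom.id_apply, eval₂Hom_C, bwd_mk, fwd_mk]
  · intro i
    fin_cases i <;>
      simp only [RingHom.comp_apply, RingHom.id_apply, bwd_mk, fwd_mk, eval₂Hom_X',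
        map_sub, map_mul, map_ofNat, bwdVars, fwdVars, Fin.zero_eta, Fin.mk_one,
        Fin.reduceFinMk, Matrix.cons_val_zero, Matrix.cons_val_one, Matrix.head_cons,
        Matrix.cons_val_two, Matrix.tail_cons, Matrix.cons_val_three,
        Matrix.cons_val_four, Fin.isValue]
    · refine quot_eq_of_sub_mem ?_
      have h : (3:MvPolynomial (Fin 5) ℤ) * (X 0 - X 1) - X 0 = 2 * X 0 - 3 * X 1 := by ring
      exact h ▸ src_mem _ (by simp)
    · refine quot_eq_of_sub_mem ?_
      have h : (2:MvPolynomial (Fin 5) ℤ) * (X 0 - X 1) - X 1 = 2 * X 0 - 3 * X 1 := by ring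
      exact h ▸ src_mem _ (by simp)

def orbEquiv : (MvPolynomial (Fin 5) ℤ ⧸ srcIdeal) ≃+* (MvPolynomial (Fin 4) ℤ ⧸ tgtIdeal) :=
  RingEquiv.ofRingHom fwd bwd fwd_bwd bwd_fwd

end OrbifoldAux

/-- Example 6.1: the integral orbifold Chow ring of `P(6,4) ≅ M̄₁,₁`:
`ℤ[x₁,x₂,v,w,u]/(2x₁-3x₂, 4x₁x₂, v²-2x₁u, w³-2x₂u, vw, 2x₂v, 2x₁w, u²-1)`
is isomorphic to
`ℤ[t,v,w,u]/(24t², v²-6tu, w³-4tu, vw, 4tv, 6tw, u²-1)`,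
induced by `x₁ ↦ 3t, x₂ ↦ 2t, v ↦ v, w ↦ w, u ↦ u`.
(Source variables: `0 = x₁, 1 = x₂, 2 = v, 3 = w, 4 = u`;
target variables: `0 = t, 1 = v, 2 = w, 3 = u`.) -/
theorem orbifold_chow_ring_P64 :
    ∃ e : (MvPolynomial (Fin 5) ℤ ⧸
            Ideal.span {2 * X 0 - 3 * X 1, 4 * (X 0 * X 1),
              X 2 ^ 2 - 2 * X 0 * X 4, X 3 ^ 3 - 2 * X 1 * X 4,
              X 2 * X 3, 2 * X 1 * X 2, 2 * X 0 * X 3, X 4 ^ 2 - 1}) ≃+*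
          (MvPolynomial (Fin 4) ℤ ⧸
            Ideal.span {24 * X 0 ^ 2, X 1 ^ 2 - 6 * X 0 * X 3,
              X 2 ^ 3 - 4 * X 0 * X 3, X 1 * X 2,
              4 * X 0 * X 1, 6 * X 0 * X 2, X 3 ^ 2 - 1}),
      e (Ideal.Quotient.mk _ (X 0)) = Ideal.Quotient.mk _ (3 * X 0) ∧
      e (Ideal.Quotient.mk _ (X 1)) = Ideal.Quotient.mk _ (2 * X 0) ∧
      e (Ideal.Quotient.mk _ (X 2)) = Ideal.Quotient.mk _ (X 1) ∧
      e (Ideal.Quotient.mk _ (X 3)) = Ideal.Quotient.mk _ (X 2) ∧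
      e (Ideal.Quotient.mk _ (X 4)) = Ideal.Quotient.mk _ (X 3) := by
  have hmk : ∀ p, orbEquiv (Ideal.Quotient.mk srcIdeal p)
      = Ideal.Quotient.mk tgtIdeal (eval₂Hom C fwdVars p) := fun p => rfl
  have h0 : orbEquiv (Ideal.Quotient.mk srcIdeal (X 0))
      = Ideal.Quotient.mk tgtIdeal (3 * X 0) := by rw [hmk]; simp [fwdVars]
  have h1 : orbEquiv (Ideal.Quotient.mk srcIdeal (X 1))
      = Ideal.Quotient.mk tgtIdeal (2 * X 0) := by rw [hmk]; simp [fwdVars]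
  have h2 : orbEquiv (Ideal.Quotient.mk srcIdeal (X 2))
      = Ideal.Quotient.mk tgtIdeal (X 1) := by rw [hmk]; simp [fwdVars]
  have h3 : orbEquiv (Ideal.Quotient.mk srcIdeal (X 3))
      = Ideal.Quotient.mk tgtIdeal (X 2) := by rw [hmk]; simp [fwdVars]
  have h4 : orbEquiv (Ideal.Quotient.mk srcIdeal (X 4))
      = Ideal.Quotient.mk tgtIdeal (X 3) := by rw [hmk]; simp [fwdVars]
  exact ⟨orbEquiv, h0, h1, h2, h3, h4⟩
end

section
/- The commutative rings ℤ[x, v]/(2x³, 2vx, v² − x²) and ℤ[x, y]/(2x³ + x²y, x², 2xy + y²) are not isomorphic. -/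
/-!
The two rings are told apart by the ring-theoretic property "`2 q³ = 0` implies `q³ = 0`".
It fails in the orbifold ring: `2x³ = 0` there, but `x³ ≠ 0`, as one sees by sending both
variables to `T` in `𝔽₂[T]`. It holds in the crepant ring: the relations have no constant
term, so `2q³ = 0` forces `q` into the ideal `(x, y)`, and the cube of that ideal lies in
`(x², 2xy + y²)`.
-/

open MvPolynomial

namespace MvPolynomial

theorem mem_idealOfVars_iff {σ R : Type*} [CommSemiring R] (p : MvPolynomial σ R) :
    p ∈ idealOfVars σ R ↔ constantCoeff p = 0 := by
  rw [← pow_one (idealOfVars σ R), mem_pow_idealOfVars_iff']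
  simp [Finsupp.degree_eq_zero_iff, constantCoeff_eq]

theorem idealOfVars_fin_two (R : Type*) [CommSemiring R] :
    idealOfVars (Fin 2) R = Ideal.span {X 0, X 1} := by
  rw [idealOfVars, Fin.range_fin_succ, Fin.range_fin_succ, Set.range_eq_empty, insert_empty_eq]
  rfl

end MvPolynomial

noncomputable abbrev orbifoldIdeal : Ideal (MvPolynomial (Fin 2) ℤ) :=
  Ideal.span {2 * X 0 ^ 3, 2 * X 1 * X 0, X 1 ^ 2 - X 0 ^ 2}

noncomputable abbrev crepantIdeal : Ideal (MvPolynomial (Fin 2) ℤ) :=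
  Ideal.span {2 * X 0 ^ 3 + X 0 ^ 2 * X 1, X 0 ^ 2, 2 * X 0 * X 1 + X 1 ^ 2}

theorem two_mul_mk_X_zero_pow_three :
    2 * Ideal.Quotient.mk orbifoldIdeal (X 0) ^ 3 = 0 := by
  rw [← map_pow, ← map_ofNat (Ideal.Quotient.mk _) 2, ← map_mul,
    Ideal.Quotient.eq_zero_iff_mem]
  exact Ideal.subset_span (by simp)

theorem orbifoldIdeal_le_ker_aeval :
    orbifoldIdeal ≤
      RingHom.ker (aeval (R := ℤ) fun _ : Fin 2 ↦ (Polynomial.X : Polynomial (ZMod 2))) := by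
  rw [Ideal.span_le]
  rintro p (rfl | rfl | rfl) <;> simp [CharTwo.two_eq_zero]

theorem mk_X_zero_pow_three_ne_zero : Ideal.Quotient.mk orbifoldIdeal (X 0) ^ 3 ≠ 0 := by
  rw [← map_pow, Ne, Ideal.Quotient.eq_zero_iff_mem]
  intro h
  simpa using orbifoldIdeal_le_ker_aeval h

theorem crepantIdeal_le_idealOfVars : crepantIdeal ≤ idealOfVars (Fin 2) ℤ := by
  rw [Ideal.span_le]
  rintro p (rfl | rfl | rfl) <;> simp [SetLike.mem_coe, mem_idealOfVars_iff]

theorem pow_three_mem_crepantIdeal {p : MvPolynomial (Fin 2) ℤ}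
    (hp : p ∈ idealOfVars (Fin 2) ℤ) : p ^ 3 ∈ crepantIdeal := by
  obtain ⟨u, v, rfl⟩ := Ideal.mem_span_pair.mp (idealOfVars_fin_two ℤ ▸ hp)
  have hcube : (u * X 0 + v * X 1) ^ 3 =
      (u ^ 3 * X 0 + (3 * u ^ 2 * v - 6 * u * v ^ 2 + 4 * v ^ 3) * X 1) * X 0 ^ 2
        + ((3 * u * v ^ 2 - 2 * v ^ 3) * X 0 + v ^ 3 * X 1) * (2 * X 0 * X 1 + X 1 ^ 2) := by
    ring
  rw [hcube]
  exact Ideal.add_mem _ (Ideal.mul_mem_left _ _ (Ideal.subset_span (by simp)))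
    (Ideal.mul_mem_left _ _ (Ideal.subset_span (by simp)))

theorem pow_three_eq_zero_of_two_mul_pow_three_eq_zero
    (q : MvPolynomial (Fin 2) ℤ ⧸ crepantIdeal) (hq : 2 * q ^ 3 = 0) : q ^ 3 = 0 := by
  obtain ⟨p, rfl⟩ := Ideal.Quotient.mk_surjective q
  rw [← map_pow, ← map_ofNat (Ideal.Quotient.mk _) 2, ← map_mul,
    Ideal.Quotient.eq_zero_iff_mem] at hq
  have hp : constantCoeff p = 0 := by
    have h2c3 := (mem_idealOfVars_iff _).mp (crepantIdeal_le_idealOfVars hq)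
    rw [map_mul, map_pow, map_ofNat] at h2c3
    simpa using h2c3
  rw [← map_pow, Ideal.Quotient.eq_zero_iff_mem]
  exact pow_three_mem_crepantIdeal ((mem_idealOfVars_iff p).mpr hp)

/-- Example 6.2: the integral orbifold Chow ring of `P(1,1,2)`,
`ℤ[x,v]/(2x³, 2vx, v² - x²)`, is not isomorphic to the integral Chow ring of its
crepant resolution `F₂`, `ℤ[x,y]/(2x³ + x²y, x², 2xy + y²)`.
(Variables: `0 = x, 1 = v` resp. `0 = x, 1 = y`.) -/
theorem orbifold_chow_ne_crepant_chow :
    ¬ Nonempty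
      ((MvPolynomial (Fin 2) ℤ ⧸
          Ideal.span {(2 * X 0 ^ 3 : MvPolynomial (Fin 2) ℤ),
            2 * X 1 * X 0, X 1 ^ 2 - X 0 ^ 2}) ≃+*
        (MvPolynomial (Fin 2) ℤ ⧸
          Ideal.span {(2 * X 0 ^ 3 + X 0 ^ 2 * X 1 : MvPolynomial (Fin 2) ℤ),
            X 0 ^ 2, 2 * X 0 * X 1 + X 1 ^ 2})) := by
  rintro ⟨e⟩
  have hcube := pow_three_eq_zero_of_two_mul_pow_three_eq_zero (e (Ideal.Quotient.mk _ (X 0)))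
    (by rw [← map_pow, ← map_ofNat e 2, ← map_mul, two_mul_mk_X_zero_pow_three, map_zero])
  rw [← map_pow, map_eq_zero_iff e e.injective] at hcube
  exact mk_X_zero_pow_three_ne_zero hcube
end
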